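/- For all real a, b with 0 < a ≤ b, and all ρ ≥ 0, one has |(1/a)·sin²(√a·ρ) − (1/b)·sin²(√b·ρ)| ≤ (ρ⁴/3)·(b − a). -/

import Mathlib

/-!
Write `t = √k ρ`. The `k`-derivative of `sin² (√k ρ) / k` is `sin t (t cos t - sin t) / k²`.
Since `|sin t| ≤ |t|` and `|sin t - t cos t| ≤ |t|³ / 3` (the derivative `t sin t` of the
latter is at most `t²`), it is bounded by `t⁴ / (3 k²) = ρ⁴ / 3`, and the mean value inequality
on `(0, ∞)` gives the Lipschitz bound.
-/

open Real Set

theorem abs_sin_sub_mul_cos_le_of_nonneg {t : ℝ} (ht : 0 ≤ t) :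
    |sin t - t * cos t| ≤ t ^ 3 / 3 := by
  have hderiv (s : ℝ) : HasDerivAt (fun s => sin s - s * cos s) (s * sin s) s :=
    ((hasDerivAt_sin s).sub ((hasDerivAt_id s).mul (hasDerivAt_cos s))).congr_deriv (by simp)
  have hbound (s : ℝ) : HasDerivAt (fun s : ℝ => s ^ 3 / 3) (s ^ 2) s :=
    ((hasDerivAt_pow 3 s).div_const 3).congr_deriv (by ring)
  refine image_norm_le_of_norm_deriv_right_le_deriv_boundary (a := 0) (b := t)
    (fun s _ => (hderiv s).continuousAt.continuousWithinAt)
    (fun s _ => (hderiv s).hasDerivWithinAt) (by simp) hbound ?_ ⟨ht, le_rfl⟩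
  rintro s ⟨hs, -⟩
  rw [Real.norm_eq_abs, abs_mul, abs_of_nonneg hs, sq]
  gcongr
  exact abs_sin_le_abs.trans_eq (abs_of_nonneg hs)

theorem abs_sin_sub_mul_cos_le (t : ℝ) : |sin t - t * cos t| ≤ |t| ^ 3 / 3 := by
  rcases le_total 0 t with ht | ht
  · rw [abs_of_nonneg ht]; exact abs_sin_sub_mul_cos_le_of_nonneg ht
  · have := abs_sin_sub_mul_cos_le_of_nonneg (neg_nonneg.mpr ht)
    rwa [sin_neg, cos_neg, show -sin t - -t * cos t = -(sin t - t * cos t) by ring, abs_neg,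
      ← abs_of_nonpos ht] at this

theorem hasDerivAt_inv_mul_sin_sqrt_mul_sq (ρ : ℝ) {k : ℝ} (hk : 0 < k) :
    HasDerivAt (fun k => 1 / k * sin (√k * ρ) ^ 2)
      (sin (√k * ρ) * (√k * ρ * cos (√k * ρ) - sin (√k * ρ)) / k ^ 2) k := by
  have hinner : HasDerivAt (fun k => √k * ρ) (1 / (2 * √k) * ρ) k :=
    (hasDerivAt_sqrt hk.ne').mul_const ρ
  simp only [one_div]
  refine ((hasDerivAt_inv hk.ne').mul (((hasDerivAt_sin _).comp k hinner).pow 2)).congr_deriv ?_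
  simp only [Function.comp_apply, Pi.pow_apply]
  field_simp
  norm_num
  linear_combination 2 * ρ * sin (√k * ρ) * cos (√k * ρ) * (sq_sqrt hk.le).symm

theorem abs_sin_mul_mul_cos_sub_sin_div_le (ρ : ℝ) {k : ℝ} (hk : 0 < k) :
    |sin (√k * ρ) * (√k * ρ * cos (√k * ρ) - sin (√k * ρ)) / k ^ 2| ≤ ρ ^ 4 / 3 := by
  set t := √k * ρ with ht
  have hprod : |sin t * (t * cos t - sin t)| ≤ |t| ^ 4 / 3 := by
    rw [abs_mul, ← abs_neg (t * cos t - sin t), neg_sub,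
      show |t| ^ 4 / 3 = |t| * (|t| ^ 3 / 3) by ring]
    exact mul_le_mul abs_sin_le_abs (abs_sin_sub_mul_cos_le t) (abs_nonneg _) (abs_nonneg _)
  have ht4 : |t| ^ 4 = ρ ^ 4 * k ^ 2 := by
    rw [show |t| ^ 4 = (|t| ^ 2) ^ 2 by ring, sq_abs, ht, mul_pow, sq_sqrt hk.le]; ring
  rw [abs_div, abs_of_pos (pow_pos hk 2), div_le_iff₀ (pow_pos hk 2)]
  linarith

theorem abs_inv_mul_sin_sqrt_mul_sq_sub_le (ρ : ℝ) {a b : ℝ} (ha : 0 < a) (hb : 0 < b) :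
    |1 / a * sin (√a * ρ) ^ 2 - 1 / b * sin (√b * ρ) ^ 2| ≤ ρ ^ 4 / 3 * |a - b| :=
  (convex_Ioi 0).norm_image_sub_le_of_norm_hasDerivWithin_le
    (fun _ hk => (hasDerivAt_inv_mul_sin_sqrt_mul_sq ρ hk).hasDerivWithinAt)
    (fun _ hk => abs_sin_mul_mul_cos_sub_sin_div_le ρ hk) hb ha

theorem stmt_2_general (a b ρ : ℝ) (ha : 0 < a) (hab : a ≤ b) :
    |(1 / a) * Real.sin (Real.sqrt a * ρ) ^ 2 - (1 / b) * Real.sin (Real.sqrt b * ρ) ^ 2| ≤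
      ρ ^ 4 / 3 * (b - a) := by
  have h := abs_inv_mul_sin_sqrt_mul_sq_sub_le ρ ha (ha.trans_le hab)
  rwa [abs_sub_comm a b, abs_of_nonneg (sub_nonneg.mpr hab)] at h

theorem stmt_2 (a b ρ : ℝ) (ha : 0 < a) (hab : a ≤ b) (hρ : 0 ≤ ρ) :
    |(1 / a) * Real.sin (Real.sqrt a * ρ) ^ 2 - (1 / b) * Real.sin (Real.sqrt b * ρ) ^ 2| ≤
      ρ ^ 4 / 3 * (b - a) :=
  stmt_2_general a b ρ ha hab
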